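/- arXiv:1601.01363 — 5 statements merged into one kernel-verified Lean document; each statement's English description precedes it below -/
import Mathlib

section
/- Let r > 0, n ≥ 2 be an integer, and t ∈ (0,1). Then the sum over all integers j not in the interval (-n, n] of e^{-(t-j)²/r²} is strictly less than (r²/(n-1)) e^{-(n-1)²/r²}. -/
/-!
Both tails are dominated by geometric series. If `|u| ≥ a + (k + 1)` with `a ≥ 0`, then
`u² ≥ a² + 2a(k + 1)`, so `e^{-u²/s} ≤ e^{-a²/s} q^{k+1}` with `q = e^{-2a/s}`. Summing gives
`e^{-a²/s} / (e^{2a/s} - 1) < e^{-a²/s} · s / (2a)`, since `e^x - 1 > x`. With `a = n - 1`,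
the tails `j > n` and `j ≤ -n` each contribute less than half of the claimed bound.
-/

open Real

namespace DiscreteGaussianTail

def natEquivIntIoi (m : ℤ) : ℕ ≃ {j : ℤ // m < j} where
  toFun k := ⟨m + 1 + k, by omega⟩
  invFun j := (j.1 - m - 1).toNat
  left_inv k := by simp only; omega
  right_inv j := by ext; simp only; have := j.2; omega

def natEquivIntIic (m : ℤ) : ℕ ≃ {j : ℤ // j ≤ m} where
  toFun k := ⟨m - k, by omega⟩
  invFun j := (m - j.1).toNat
  left_inv k := by simp only; omega
  right_inv j := by ext; simp only; have := j.2; omega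

variable {a s : ℝ}

theorem exp_neg_sq_div_le_geometric (ha : 0 ≤ a) (hs : 0 < s) {u : ℝ} {k : ℕ}
    (hu : a + (k + 1) ≤ |u|) :
    exp (-u ^ 2 / s) ≤ exp (-a ^ 2 / s) * exp (-(2 * a / s)) ^ (k + 1) := by
  have hsq : a ^ 2 + 2 * a * (k + 1) ≤ u ^ 2 := by
    rw [← sq_abs u]; nlinarith [k.cast_nonneg (α := ℝ)]
  rw [← exp_nat_mul, ← exp_add, exp_le_exp]
  calc -u ^ 2 / s ≤ -(a ^ 2 + 2 * a * (k + 1)) / s := by gcongr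
    _ = -a ^ 2 / s + ((k + 1 : ℕ) : ℝ) * -(2 * a / s) := by push_cast; ring

theorem summable_exp_neg_pow_succ {x : ℝ} (hx : 0 < x) :
    Summable fun k : ℕ ↦ exp (-x) ^ (k + 1) :=
  (summable_geometric_of_lt_one (exp_pos _).le (exp_lt_one_iff.mpr (by linarith))).comp_injective
    (add_left_injective 1)

theorem tsum_exp_neg_pow_succ_lt_inv {x : ℝ} (hx : 0 < x) :
    ∑' k : ℕ, exp (-x) ^ (k + 1) < x⁻¹ := by
  have hq : exp (-x) < 1 := exp_lt_one_iff.mpr (by linarith)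
  have hsum : ∑' k : ℕ, exp (-x) ^ (k + 1) = (exp x - 1)⁻¹ := by
    simp_rw [pow_succ, tsum_mul_right, tsum_geometric_of_lt_one (exp_pos _).le hq, exp_neg]
    field_simp
  rw [hsum]
  exact inv_strictAnti₀ hx (by linarith [add_one_lt_exp hx.ne'])

section

variable (ha : 0 < a) (hs : 0 < s) {u : ℕ → ℝ} (hu : ∀ k, a + (k + 1) ≤ |u k|)
include ha hs hu

theorem summable_exp_neg_sq_div : Summable fun k ↦ exp (-u k ^ 2 / s) :=
  .of_nonneg_of_le (fun _ ↦ (exp_pos _).le)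
    (fun k ↦ exp_neg_sq_div_le_geometric ha.le hs (hu k))
    ((summable_exp_neg_pow_succ (by positivity)).mul_left _)

theorem tsum_exp_neg_sq_div_lt :
    ∑' k, exp (-u k ^ 2 / s) < s / (2 * a) * exp (-a ^ 2 / s) := by
  have hx : 0 < 2 * a / s := by positivity
  calc ∑' k, exp (-u k ^ 2 / s)
      ≤ ∑' k : ℕ, exp (-a ^ 2 / s) * exp (-(2 * a / s)) ^ (k + 1) :=
        (summable_exp_neg_sq_div ha hs hu).tsum_le_tsum
          (fun k ↦ exp_neg_sq_div_le_geometric ha.le hs (hu k))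
          ((summable_exp_neg_pow_succ hx).mul_left _)
    _ = exp (-a ^ 2 / s) * ∑' k : ℕ, exp (-(2 * a / s)) ^ (k + 1) := tsum_mul_left
    _ < exp (-a ^ 2 / s) * (2 * a / s)⁻¹ := by
        gcongr; exact tsum_exp_neg_pow_succ_lt_inv hx
    _ = s / (2 * a) * exp (-a ^ 2 / s) := by rw [inv_div, mul_comm]

end

variable (ha : 0 < a) (hs : 0 < s) {c : ℝ} {m : ℤ}

theorem le_abs_sub_natEquivIntIoi (hm : a ≤ m - c) (k : ℕ) :
    a + (k + 1) ≤ |c - (natEquivIntIoi m k : ℤ)| := by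
  rw [abs_sub_comm]
  refine le_trans ?_ (le_abs_self _)
  simp only [natEquivIntIoi, Equiv.coe_fn_mk]; push_cast; linarith

theorem le_abs_sub_natEquivIntIic (hm : a + 1 ≤ c - m) (k : ℕ) :
    a + (k + 1) ≤ |c - (natEquivIntIic m k : ℤ)| := by
  refine le_trans ?_ (le_abs_self _)
  simp only [natEquivIntIic, Equiv.coe_fn_mk]; push_cast; linarith

include ha hs

theorem summable_exp_neg_sq_div_Ioi (hm : a ≤ m - c) :
    Summable fun j : {j : ℤ // m < j} ↦ exp (-(c - j) ^ 2 / s) :=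
  (natEquivIntIoi m).summable_iff.mp (summable_exp_neg_sq_div ha hs (le_abs_sub_natEquivIntIoi hm))

theorem tsum_exp_neg_sq_div_Ioi_lt (hm : a ≤ m - c) :
    ∑' j : {j : ℤ // m < j}, exp (-(c - j) ^ 2 / s) < s / (2 * a) * exp (-a ^ 2 / s) := by
  rw [← (natEquivIntIoi m).tsum_eq]
  exact tsum_exp_neg_sq_div_lt ha hs (le_abs_sub_natEquivIntIoi hm)

theorem summable_exp_neg_sq_div_Iic (hm : a + 1 ≤ c - m) :
    Summable fun j : {j : ℤ // j ≤ m} ↦ exp (-(c - j) ^ 2 / s) :=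
  (natEquivIntIic m).summable_iff.mp (summable_exp_neg_sq_div ha hs (le_abs_sub_natEquivIntIic hm))

theorem tsum_exp_neg_sq_div_Iic_lt (hm : a + 1 ≤ c - m) :
    ∑' j : {j : ℤ // j ≤ m}, exp (-(c - j) ^ 2 / s) < s / (2 * a) * exp (-a ^ 2 / s) := by
  rw [← (natEquivIntIic m).tsum_eq]
  exact tsum_exp_neg_sq_div_lt ha hs (le_abs_sub_natEquivIntIic hm)

end DiscreteGaussianTail

open DiscreteGaussianTail

theorem discrete_gaussian_tail (r : ℝ) (hr : 0 < r) (n : ℤ) (hn : 2 ≤ n)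
    (t : ℝ) (ht : t ∈ Set.Ioo (0 : ℝ) 1) :
    ∑' j : {j : ℤ // j ≤ -n ∨ n < j}, Real.exp (-(t - (j : ℤ)) ^ 2 / r ^ 2)
      < r ^ 2 / ((n : ℝ) - 1) * Real.exp (-((n : ℝ) - 1) ^ 2 / r ^ 2) := by
  obtain ⟨ht0, ht1⟩ := ht
  have ha : (0 : ℝ) < n - 1 := by linarith [show (2 : ℝ) ≤ n by exact_mod_cast hn]
  have hs : 0 < r ^ 2 := by positivity
  have hIic : (n : ℝ) - 1 + 1 ≤ t - ((-n : ℤ) : ℝ) := by push_cast; linarith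
  have hIoi : (n : ℝ) - 1 ≤ n - t := by linarith
  have hdisj : Disjoint {j : ℤ | j ≤ -n} {j | n < j} :=
    Set.disjoint_left.mpr fun j (h₁ : j ≤ -n) (h₂ : n < j) ↦ by omega
  calc _ = ∑' j : {j : ℤ // j ≤ -n}, exp (-(t - j) ^ 2 / r ^ 2)
        + ∑' j : {j : ℤ // n < j}, exp (-(t - j) ^ 2 / r ^ 2) :=
        Summable.tsum_union_disjoint (f := fun j : ℤ ↦ exp (-(t - j) ^ 2 / r ^ 2)) hdisj
          (summable_exp_neg_sq_div_Iic ha hs hIic) (summable_exp_neg_sq_div_Ioi ha hs hIoi)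
    _ < r ^ 2 / (2 * (n - 1)) * exp (-(n - 1) ^ 2 / r ^ 2)
        + r ^ 2 / (2 * (n - 1)) * exp (-(n - 1) ^ 2 / r ^ 2) :=
        add_lt_add (tsum_exp_neg_sq_div_Iic_lt ha hs hIic) (tsum_exp_neg_sq_div_Ioi_lt ha hs hIoi)
    _ = _ := by field_simp; ring
end

section
/- For every integer k ≥ 0 and every real x with |x| ≥ k/2, the k-th Hermite polynomial satisfies |H_k(x)| ≤ |2x|^k. -/
open Real Finset

/-- The `k`-th Hermite polynomial. -/
noncomputable def hermitePoly (k : ℕ) (x : ℝ) : ℝ :=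
  (Nat.factorial k : ℝ) * ∑ i ∈ Finset.range (k / 2 + 1),
    (-1 : ℝ) ^ i * (2 * x) ^ (k - 2 * i) /
      ((Nat.factorial i : ℝ) * (Nat.factorial (k - 2 * i) : ℝ))

lemma alt_sum_bound : ∀ (n : ℕ) (f : ℕ → ℝ), (∀ i, i < n → 0 ≤ f i) →
    (∀ i, i + 1 < n → f (i + 1) ≤ f i) →
    0 ≤ ∑ i ∈ Finset.range n, (-1 : ℝ) ^ i * f i ∧
      (n = 0 ∨ ∑ i ∈ Finset.range n, (-1 : ℝ) ^ i * f i ≤ f 0) := by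
  intro n
  induction n using Nat.strong_induction_on with
  | _ n ih =>
    match n with
    | 0 => intro f _ _; simp
    | 1 =>
      intro f h0 _
      constructor
      · simpa using h0 0 one_pos
      · right; simp
    | (m + 2) =>
      intro f h0 h1
      have key : ∑ i ∈ Finset.range (m + 2), (-1 : ℝ) ^ i * f i
          = f 0 - f 1 + ∑ i ∈ Finset.range m, (-1 : ℝ) ^ i * f (i + 2) := by
        rw [Finset.sum_range_succ' (fun i => (-1 : ℝ) ^ i * f i) (m + 1),
          Finset.sum_range_succ' (fun i => (-1 : ℝ) ^ (i + 1) * f (i + 1)) m]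
        simp [pow_succ]
        ring
      obtain ⟨hge, hle⟩ := ih m (by omega) (fun i => f (i + 2))
        (fun i hi => h0 (i + 2) (by omega))
        (fun i hi => by simpa using h1 (i + 2) (by omega))
      have h10 : f 1 ≤ f 0 := h1 0 (by omega)
      have hle1 : ∑ i ∈ Finset.range m, (-1 : ℝ) ^ i * f (i + 2) ≤ f 1 := by
        rcases Nat.eq_zero_or_pos m with h | hm
        · subst h
          simpa using h0 1 (by omega)
        · rcases hle with h | h
          · omega
          · exact h.trans (h1 1 (by omega))
      constructor
      · rw [key]; linarith
      · right; rw [key]; linarith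

theorem hermite_bound (k : ℕ) (x : ℝ) (hx : (k : ℝ) / 2 ≤ |x|) :
    |hermitePoly k x| ≤ |2 * x| ^ k := by
  rcases Nat.eq_zero_or_pos k with hk | hk
  · subst hk; simp [hermitePoly]
  set B := |2 * x| with hBdef
  have hB2 : B = 2 * |x| := by rw [hBdef, abs_mul]; norm_num
  have hB : (k : ℝ) ≤ B := by rw [hB2]; linarith
  have hkpos : (0 : ℝ) < k := by exact_mod_cast hk
  have hBpos : 0 < B := lt_of_lt_of_le hkpos hB
  set f : ℕ → ℝ := fun i => (Nat.factorial k : ℝ) * B ^ (k - 2 * i) /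
      ((Nat.factorial i : ℝ) * (Nat.factorial (k - 2 * i) : ℝ)) with hf
  set ε : ℝ := (2 * x) / B with hε
  have hεB : ε * B = 2 * x := div_mul_cancel₀ _ (ne_of_gt hBpos)
  have h2x : (2 * x) ≠ 0 := by
    intro h; rw [hBdef, h] at hBpos; simp at hBpos
  have hε2 : ε ^ 2 = 1 := by
    rw [hε, div_pow, hBdef, sq_abs, div_self (pow_ne_zero _ h2x)]
  have hmain : hermitePoly k x = ε ^ k * ∑ i ∈ Finset.range (k / 2 + 1),
      (-1 : ℝ) ^ i * f i := by
    unfold hermitePoly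
    rw [Finset.mul_sum, Finset.mul_sum]
    apply Finset.sum_congr rfl
    intro i hi
    have h2i : 2 * i ≤ k := by
      simp only [Finset.mem_range] at hi; omega
    have hεk : ε ^ (k - 2 * i) = ε ^ k := by
      have : ε ^ k = ε ^ (k - 2 * i) * (ε ^ 2) ^ i := by
        rw [← pow_mul, ← pow_add]; congr 1; omega
      rw [this, hε2, one_pow, mul_one]
    have hpow : (2 * x) ^ (k - 2 * i) = ε ^ k * B ^ (k - 2 * i) := by
      rw [← hεB, mul_pow, hεk]
    rw [hpow, hf]
    ring
  have hεabs : |ε| = 1 := by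
    rw [hε, abs_div, ← hBdef, abs_of_pos hBpos, div_self (ne_of_gt hBpos)]
  have hnn : ∀ i, i < k / 2 + 1 → 0 ≤ f i := by
    intro i _
    rw [hf]
    positivity
  have hmono : ∀ i, i + 1 < k / 2 + 1 → f (i + 1) ≤ f i := by
    intro i hi
    have h2i : 2 * i + 2 ≤ k := by
      have : i + 1 ≤ k / 2 := by omega
      omega
    set m := k - 2 * (i + 1) with hm
    have hm2 : k - 2 * i = m + 2 := by omega
    have hmk : m + 2 ≤ k := by omega
    rw [hf]
    simp only [hm2]
    have d1 : (0 : ℝ) < (Nat.factorial (i + 1) : ℝ) * (Nat.factorial m : ℝ) := by positivity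
    have d2 : (0 : ℝ) < (Nat.factorial i : ℝ) * (Nat.factorial (m + 2) : ℝ) := by positivity
    rw [div_le_div_iff₀ d1 d2]
    have e1 : B ^ (m + 2) = B ^ m * B ^ 2 := by rw [pow_add]
    have e2 : (Nat.factorial (m + 2) : ℝ) = (m + 2) * (m + 1) * Nat.factorial m := by
      rw [Nat.factorial_succ, Nat.factorial_succ]; push_cast; ring
    have e3 : (Nat.factorial (i + 1) : ℝ) = (i + 1) * Nat.factorial i := by
      rw [Nat.factorial_succ]; push_cast; ring
    rw [e1, e2, e3]
    have hmB : (m : ℝ) + 2 ≤ B := by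
      have : (m : ℝ) + 2 ≤ (k : ℝ) := by exact_mod_cast hmk
      linarith
    have hfk : (0 : ℝ) < Nat.factorial k := by positivity
    have hfm : (0 : ℝ) < Nat.factorial m := by positivity
    have hfi : (0 : ℝ) < Nat.factorial i := by positivity
    have hBm : (0 : ℝ) < B ^ m := by positivity
    have key : ((m : ℝ) + 2) * ((m : ℝ) + 1) ≤ B ^ 2 * ((i : ℝ) + 1) := by
      nlinarith [hmB, hBpos]
    calc (Nat.factorial k : ℝ) * B ^ m * ((Nat.factorial i : ℝ) * ((m + 2) * (m + 1) * Nat.factorial m))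
        = (Nat.factorial k : ℝ) * B ^ m * (Nat.factorial i : ℝ) * (Nat.factorial m : ℝ) * ((m + 2) * (m + 1)) := by ring
      _ ≤ (Nat.factorial k : ℝ) * B ^ m * (Nat.factorial i : ℝ) * (Nat.factorial m : ℝ) * (B ^ 2 * (i + 1)) := by
          apply mul_le_mul_of_nonneg_left key
          positivity
      _ = (Nat.factorial k : ℝ) * (B ^ m * B ^ 2) * ((i + 1) * (Nat.factorial i : ℝ) * (Nat.factorial m : ℝ)) := by ring
  obtain ⟨hge, hle⟩ := alt_sum_bound (k / 2 + 1) f hnn hmono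
  have hle' : ∑ i ∈ Finset.range (k / 2 + 1), (-1 : ℝ) ^ i * f i ≤ f 0 := by
    rcases hle with h | h
    · omega
    · exact h
  have hf0 : f 0 = B ^ k := by
    rw [hf]
    simp [Nat.factorial_zero]
    rw [mul_comm, mul_div_assoc, div_self (by positivity), mul_one]
  rw [hmain, abs_mul, abs_pow, hεabs, one_pow, one_mul, abs_of_nonneg hge]
  rw [← hf0]
  exact hle'
end

section
/- For every real x, the sum over all integers m of sinc²(x - m) equals 1, where sinc(y) = sin(πy)/(πy) for y ≠ 0 and sinc(0) = 1. -/
/-!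
The numbers `sinc (x - m)` are, up to unimodular factors, the Fourier coefficients on `[0, 1]`
of the character `t ↦ exp (2πixt)`, whose `L²` norm is `1`; Parseval's identity gives the claim.
-/

open Real

noncomputable def sinc (y : ℝ) : ℝ :=
  if y = 0 then 1 else Real.sin (π * y) / (π * y)

open Complex MeasureTheory

lemma sinc_eq_sinc_pi_mul (y : ℝ) : _root_.sinc y = Real.sinc (π * y) := by
  simp [_root_.sinc, Real.sinc, pi_ne_zero]

lemma norm_integral_exp_two_pi_I_mul (θ : ℝ) :
    ‖∫ t in (0 : ℝ)..1, cexp (2 * π * I * θ * t)‖ = |_root_.sinc θ| := by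
  rcases eq_or_ne θ 0 with rfl | hθ
  · simp [_root_.sinc]
  have hc : (2 * π * I * θ : ℂ) ≠ 0 := by simp [hθ, pi_ne_zero]
  rw [integral_exp_mul_complex hc, sinc_eq_sinc_pi_mul, Real.sinc_of_ne_zero (by positivity)]
  have hexp : (2 * π * I * θ : ℂ) * (1 : ℝ) = I * (2 * π * θ : ℝ) := by push_cast; ring
  rw [hexp, ofReal_zero, mul_zero, Complex.exp_zero, norm_div, norm_exp_I_mul_ofReal_sub_one,
    show 2 * π * θ / 2 = π * θ by ring]
  simp only [norm_mul, Real.norm_ofNat, Complex.norm_ofNat, norm_real, norm_eq_abs, norm_I,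
    abs_of_pos pi_pos, mul_one, abs_div, abs_mul]
  field_simp

lemma fourierCoeffOn_exp_two_pi_I_mul (x : ℝ) (n : ℤ) :
    fourierCoeffOn zero_lt_one (fun t : ℝ => cexp (2 * π * I * x * t)) n
      = ∫ t in (0 : ℝ)..1, cexp (2 * π * I * (x - n : ℝ) * t) := by
  rw [fourierCoeffOn_eq_integral]
  simp only [fourier_coe_apply, smul_eq_mul, ← Complex.exp_add, sub_zero, div_one, one_smul,
    ofReal_one]
  congr 1 with t
  push_cast
  ring_nf

theorem tsum_sinc_sq (x : ℝ) : ∑' m : ℤ, (_root_.sinc (x - (m : ℤ))) ^ 2 = 1 := by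
  have hL2 : MemLp (fun t : ℝ => cexp (2 * π * I * x * t)) 2 (volume.restrict (Set.Ioc 0 1)) :=
    MemLp.of_bound (by fun_prop) 1 (ae_of_all _ fun t => by simp [Complex.norm_exp])
  have parseval := tsum_sq_fourierCoeffOn zero_lt_one hL2
  simp_rw [fourierCoeffOn_exp_two_pi_I_mul, norm_integral_exp_two_pi_I_mul, sq_abs] at parseval
  simpa [Complex.norm_exp] using parseval
end

section
/- Let r > 0, n ≥ 2 an integer, d ≥ 1, and t ∈ (0,1)^d. Let J_n = {j ∈ ℤ^d : j ∈ (-n,n]^d}. Then ∑_{j ∉ J_n} sinc²(t-j) e^{-‖t-j‖²/r²} ≤ (d/π²) · r² e^{-(n-1)²/r²} / (n²(n-1)), where sinc(x) = ∏_{k=1}^d sin(π x_k)/(π x_k) and ‖·‖ is the Euclidean norm on ℝ^d. -/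
open Real

noncomputable def sincd {d : ℕ} (x : Fin d → ℝ) : ℝ := ∏ k, _root_.sinc (x k)

/-!
The summand factorizes over the coordinates, and a lattice point outside the box `(-n, n]^d` has
some coordinate `k` outside `(-n, n]`. Summing over the points whose `k`-th coordinate is outside
bounds the sum by `∑ₖ (tail in coordinate k) · ∏_{m ≠ k} (full sum in coordinate m)`.
The full one-dimensional sums are at most `∑ₘ sinc²(x - m) = 1`, which is Parseval's identity
for `s ↦ exp(2πixs)` on `[0, 1]`. In the tail `|x - v| ≥ n`, so `sinc²(x - v) ≤ 1/(πn)²`, and on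
each side the Gaussian factors are dominated by a geometric series of ratio `exp(-(2n - 1)/r²)`,
whose sum is at most `r²/(2n - 1) · exp(-(n - 1)²/r²)`.
-/

open scoped ENNReal
open MeasureTheory Set

lemma norm_integral_exp_two_pi_I_mul_eq_abs_sinc (y : ℝ) :
    ‖∫ s in (0 : ℝ)..1, Complex.exp (2 * π * Complex.I * y * s)‖ = |_root_.sinc y| := by
  rcases eq_or_ne y 0 with rfl | hy
  · simp [_root_.sinc]
  have hc : 2 * π * Complex.I * y ≠ 0 := by simp [hy, pi_ne_zero]
  rw [integral_exp_mul_complex hc, _root_.sinc, if_neg hy, Complex.ofReal_one,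
    Complex.ofReal_zero, mul_zero, Complex.exp_zero, mul_one, norm_div,
    show 2 * π * Complex.I * y = Complex.I * ↑(2 * π * y) by push_cast; ring,
    Complex.norm_exp_I_mul_ofReal_sub_one, norm_mul, norm_mul, Complex.norm_I, one_mul, abs_div]
  simp only [Complex.norm_real, Real.norm_eq_abs]
  rw [show 2 * π * y / 2 = π * y by ring, abs_mul (2 * π), abs_mul 2, abs_two, mul_assoc 2,
    mul_div_mul_left _ _ two_ne_zero, abs_mul π]

theorem hasSum_sinc_sub_int_sq (x : ℝ) : HasSum (fun n : ℤ => _root_.sinc (x - n) ^ 2) 1 := by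
  set f : ℝ → ℂ := fun s => Complex.exp (2 * π * Complex.I * x * s)
  have hf : ∀ s : ℝ, ‖f s‖ = 1 := fun s => by
    simp only [f]
    rw [show 2 * π * Complex.I * x * s = ↑(2 * π * x * s) * Complex.I by push_cast; ring]
    exact Complex.norm_exp_ofReal_mul_I _
  have hL2 : MemLp f 2 (volume.restrict (Ioc 0 1)) :=
    MemLp.of_bound (by fun_prop) 1 (.of_forall fun s => (hf s).le)
  convert hasSum_sq_fourierCoeffOn zero_lt_one hL2 using 1
  · ext n
    rw [fourierCoeffOn_eq_integral, sub_zero, div_one, one_smul, ← sq_abs,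
      ← norm_integral_exp_two_pi_I_mul_eq_abs_sinc]
    congr 2
    refine intervalIntegral.integral_congr (fun s _ => ?_)
    rw [fourier_coe_apply, smul_eq_mul, ← Complex.exp_add]
    push_cast
    ring_nf
  · simp [hf]

lemma sinc_sq_le_of_le_abs {a y : ℝ} (ha : 0 < a) (h : a ≤ |y|) :
    _root_.sinc y ^ 2 ≤ 1 / (π * a) ^ 2 := by
  have hy : y ≠ 0 := abs_pos.1 (ha.trans_le h)
  rw [_root_.sinc, if_neg hy, div_pow]
  calc sin (π * y) ^ 2 / (π * y) ^ 2 ≤ 1 / (π * y) ^ 2 := by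
        gcongr
        exact sin_sq_le_one _
    _ ≤ 1 / (π * a) ^ 2 := by
        rw [← sq_abs (π * y), abs_mul, abs_of_pos pi_pos]
        gcongr

lemma exp_neg_sq_div_le_of_le_abs {a y : ℝ} (r : ℝ) (ha : 0 ≤ a) (h : a ≤ |y|) :
    exp (-y ^ 2 / r ^ 2) ≤ exp (-a ^ 2 / r ^ 2) := by
  rw [← sq_abs y]
  gcongr

lemma exp_neg_mul_inv_one_sub_exp_neg_le {c : ℝ} (hc : 0 < c) :
    exp (-c) * (1 - exp (-c))⁻¹ ≤ c⁻¹ := by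
  have h1 : exp (-c) < 1 := exp_lt_one_iff.2 (neg_lt_zero.2 hc)
  have h2 : exp (-c) * exp c = 1 := by rw [← exp_add, neg_add_cancel, exp_zero]
  rw [← div_eq_mul_inv, div_le_iff₀ (sub_pos.2 h1)]
  field_simp
  nlinarith [add_one_le_exp c, exp_pos (-c)]

lemma tsum_exp_neg_sq_nat_add_le {a r : ℝ} (ha : 1 < 2 * a) (hr : 0 < r) :
    ∑' m : ℕ, ENNReal.ofReal (exp (-(a + m) ^ 2 / r ^ 2))
      ≤ ENNReal.ofReal (r ^ 2 / (2 * a - 1) * exp (-(a - 1) ^ 2 / r ^ 2)) := by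
  set c := (2 * a - 1) / r ^ 2
  set p := exp (-c)
  set E := exp (-(a - 1) ^ 2 / r ^ 2)
  have hc : 0 < c := div_pos (by linarith) (by positivity)
  have hp : p < 1 := exp_lt_one_iff.2 (neg_lt_zero.2 hc)
  -- `(a + m)² = (a - 1)² + (m + 1)(2a - 1) + m(m + 1)`
  have hterm (m : ℕ) : exp (-(a + m) ^ 2 / r ^ 2) ≤ E * p * p ^ m := by
    rw [mul_assoc, ← pow_succ', ← exp_nat_mul, ← exp_add]
    gcongr
    rw [show -(a - 1) ^ 2 / r ^ 2 + (m + 1 : ℕ) * -c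
      = (-(a - 1) ^ 2 - (m + 1) * (2 * a - 1)) / r ^ 2 by push_cast; ring]
    gcongr
    nlinarith [(Nat.cast_nonneg m : (0 : ℝ) ≤ m)]
  have hgeo : HasSum (fun m : ℕ => E * p * p ^ m) (E * p * (1 - p)⁻¹) :=
    (hasSum_geometric_of_lt_one (exp_pos _).le hp).mul_left _
  calc ∑' m : ℕ, ENNReal.ofReal (exp (-(a + m) ^ 2 / r ^ 2))
      ≤ ∑' m : ℕ, ENNReal.ofReal (E * p * p ^ m) :=
        ENNReal.tsum_le_tsum fun m => ENNReal.ofReal_le_ofReal (hterm m)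
    _ = ENNReal.ofReal (E * (p * (1 - p)⁻¹)) := by
        rw [← ENNReal.ofReal_tsum_of_nonneg (fun m => by positivity) hgeo.summable,
          hgeo.tsum_eq, mul_assoc]
    _ ≤ ENNReal.ofReal (r ^ 2 / (2 * a - 1) * E) := by
        rw [mul_comm _ E, ← inv_div]
        exact ENNReal.ofReal_le_ofReal
          (mul_le_mul_of_nonneg_left (exp_neg_mul_inv_one_sub_exp_neg_le hc) (exp_pos _).le)

lemma tsum_exp_neg_sq_sub_int_compl_Ioc_le {x r : ℝ} (hx : x ∈ Ioo 0 1) (hr : 0 < r) {n : ℤ}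
    (hn : (1 : ℝ) < n) :
    ∑' v : ↥(Ioc (-n) n)ᶜ, ENNReal.ofReal (exp (-(x - v) ^ 2 / r ^ 2))
      ≤ ENNReal.ofReal (r ^ 2 / (n - 1) * exp (-(n - 1) ^ 2 / r ^ 2)) := by
  obtain ⟨hx0, hx1⟩ := hx
  set g : ℤ → ℝ≥0∞ := fun v => ENNReal.ofReal (exp (-(x - v) ^ 2 / r ^ 2))
  set b : ℕ → ℝ≥0∞ := fun m => ENNReal.ofReal (exp (-(n + m) ^ 2 / r ^ 2))
  -- each half of the complement is enumerated injectively by `m : ℕ` with `n + m ≤ |x - v|`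
  have hupper : ∑' v : {v : ℤ | n < v}, g v ≤ ∑' m, b m := by
    refine (ENNReal.tsum_le_tsum fun v => ?_).trans (ENNReal.tsum_comp_le_tsum_of_injective
      (f := fun v : {v : ℤ | n < v} => (v - n - 1).toNat) (fun v w h => ?_) b)
    · obtain ⟨v, hv : n < v⟩ := v
      have hm : (((v - n - 1).toNat : ℤ) : ℝ) = v - n - 1 := by
        exact_mod_cast Int.toNat_of_nonneg (by omega)
      refine ENNReal.ofReal_le_ofReal (exp_neg_sq_div_le_of_le_abs r (by positivity) ?_)
      have : (n : ℝ) + 1 ≤ v := by exact_mod_cast hv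
      push_cast at hm ⊢
      rw [hm, abs_sub_comm, abs_of_pos (by linarith)]
      linarith
    · obtain ⟨v, hv : n < v⟩ := v
      obtain ⟨w, hw : n < w⟩ := w
      simp only [Subtype.mk.injEq] at h ⊢
      omega
  have hlower : ∑' v : {v : ℤ | v ≤ -n}, g v ≤ ∑' m, b m := by
    refine (ENNReal.tsum_le_tsum fun v => ?_).trans (ENNReal.tsum_comp_le_tsum_of_injective
      (f := fun v : {v : ℤ | v ≤ -n} => (-n - v).toNat) (fun v w h => ?_) b)
    · obtain ⟨v, hv : v ≤ -n⟩ := v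
      have hm : (((-n - v).toNat : ℤ) : ℝ) = -n - v := by
        exact_mod_cast Int.toNat_of_nonneg (by omega)
      refine ENNReal.ofReal_le_ofReal (exp_neg_sq_div_le_of_le_abs r (by positivity) ?_)
      have : (v : ℝ) ≤ -n := by exact_mod_cast hv
      push_cast at hm ⊢
      rw [hm, abs_of_pos (by linarith)]
      linarith
    · obtain ⟨v, hv : v ≤ -n⟩ := v
      obtain ⟨w, hw : w ≤ -n⟩ := w
      simp only [Subtype.mk.injEq] at h ⊢
      omega
  have hsplit : (Ioc (-n) n)ᶜ = {v : ℤ | n < v} ∪ {v : ℤ | v ≤ -n} := by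
    ext v
    simp only [mem_compl_iff, mem_Ioc, mem_union, mem_ofPred_eq]
    omega
  have hhalf := tsum_exp_neg_sq_nat_add_le (a := n) (by linarith) hr
  have hhalf_nonneg : 0 ≤ r ^ 2 / (2 * n - 1) * exp (-(n - 1) ^ 2 / r ^ 2) :=
    mul_nonneg (div_nonneg (sq_nonneg r) (by linarith)) (exp_pos _).le
  calc ∑' v : ↥(Ioc (-n) n)ᶜ, g v
      ≤ ∑' v : {v : ℤ | n < v}, g v + ∑' v : {v : ℤ | v ≤ -n}, g v :=
        hsplit ▸ ENNReal.tsum_union_le g _ _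
    _ ≤ ENNReal.ofReal (r ^ 2 / (2 * n - 1) * exp (-(n - 1) ^ 2 / r ^ 2))
        + ENNReal.ofReal (r ^ 2 / (2 * n - 1) * exp (-(n - 1) ^ 2 / r ^ 2)) :=
        add_le_add (hupper.trans hhalf) (hlower.trans hhalf)
    _ ≤ ENNReal.ofReal (r ^ 2 / (n - 1) * exp (-(n - 1) ^ 2 / r ^ 2)) := by
        rw [← ENNReal.ofReal_add hhalf_nonneg hhalf_nonneg, ← add_mul]
        gcongr
        rw [← add_div, div_le_div_iff₀ (by linarith) (by linarith)]
        nlinarith [sq_nonneg r]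

lemma tsum_sinc_sub_int_sq_mul_exp_le_one (x r : ℝ) :
    ∑' v : ℤ, ENNReal.ofReal (_root_.sinc (x - v) ^ 2 * exp (-(x - v) ^ 2 / r ^ 2)) ≤ 1 := by
  have hsum := hasSum_sinc_sub_int_sq x
  calc ∑' v : ℤ, ENNReal.ofReal (_root_.sinc (x - v) ^ 2 * exp (-(x - v) ^ 2 / r ^ 2))
      ≤ ∑' v : ℤ, ENNReal.ofReal (_root_.sinc (x - v) ^ 2) := by
        refine ENNReal.tsum_le_tsum fun v => ENNReal.ofReal_le_ofReal ?_
        refine mul_le_of_le_one_right (sq_nonneg _) (exp_le_one_iff.2 ?_)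
        exact div_nonpos_of_nonpos_of_nonneg (neg_nonpos.2 (sq_nonneg _)) (sq_nonneg r)
    _ = 1 := by
        rw [← ENNReal.ofReal_tsum_of_nonneg (fun _ => sq_nonneg _) hsum.summable, hsum.tsum_eq,
          ENNReal.ofReal_one]

lemma tsum_sinc_sub_int_sq_mul_exp_compl_Ioc_le {x r : ℝ} (hx : x ∈ Ioo 0 1) (hr : 0 < r)
    {n : ℤ} (hn : (1 : ℝ) < n) :
    ∑' v : ↥(Ioc (-n) n)ᶜ,
        ENNReal.ofReal (_root_.sinc (x - v) ^ 2 * exp (-(x - v) ^ 2 / r ^ 2))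
      ≤ ENNReal.ofReal (r ^ 2 * exp (-(n - 1) ^ 2 / r ^ 2) / (π ^ 2 * n ^ 2 * (n - 1))) := by
  have hsinc (v : ↥(Ioc (-n) n)ᶜ) : _root_.sinc (x - v) ^ 2 ≤ 1 / (π * n) ^ 2 := by
    refine sinc_sq_le_of_le_abs (by linarith) ?_
    obtain ⟨v, hv⟩ := v
    simp only [mem_compl_iff, mem_Ioc, not_and_or, not_lt, not_le] at hv
    rcases hv with hv | hv
    · have : (v : ℝ) ≤ -n := by exact_mod_cast hv
      rw [abs_of_pos (by linarith [hx.1])]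
      linarith [hx.1]
    · have : (n : ℝ) + 1 ≤ v := by exact_mod_cast hv
      rw [abs_sub_comm, abs_of_pos (by linarith [hx.2])]
      linarith [hx.2]
  calc ∑' v : ↥(Ioc (-n) n)ᶜ,
        ENNReal.ofReal (_root_.sinc (x - v) ^ 2 * exp (-(x - v) ^ 2 / r ^ 2))
      ≤ ∑' v : ↥(Ioc (-n) n)ᶜ,
          ENNReal.ofReal (1 / (π * n) ^ 2) * ENNReal.ofReal (exp (-(x - v) ^ 2 / r ^ 2)) := by
        refine ENNReal.tsum_le_tsum fun v => ?_
        rw [← ENNReal.ofReal_mul (by positivity)]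
        exact ENNReal.ofReal_le_ofReal (mul_le_mul_of_nonneg_right (hsinc v) (exp_pos _).le)
    _ ≤ ENNReal.ofReal (1 / (π * n) ^ 2)
          * ENNReal.ofReal (r ^ 2 / (n - 1) * exp (-(n - 1) ^ 2 / r ^ 2)) := by
        rw [ENNReal.tsum_mul_left]
        gcongr
        exact tsum_exp_neg_sq_sub_int_compl_Ioc_le hx hr hn
    _ = ENNReal.ofReal (r ^ 2 * exp (-(n - 1) ^ 2 / r ^ 2) / (π ^ 2 * n ^ 2 * (n - 1))) := by
        rw [← ENNReal.ofReal_mul (by positivity)]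
        congr 1
        field_simp

theorem tsum_prod_le_prod_tsum {ι κ : Type*} [Fintype ι] (F : ι → κ → ℝ≥0∞) :
    ∑' j : ι → κ, ∏ k, F k (j k) ≤ ∏ k, ∑' v, F k v := by
  classical
  refine ENNReal.summable.tsum_le_of_sum_le fun s => ?_
  calc ∑ j ∈ s, ∏ k, F k (j k)
      ≤ ∑ j ∈ Fintype.piFinset fun k => s.image (· k), ∏ k, F k (j k) :=
        Finset.sum_le_sum_of_subset fun j hj =>
          Fintype.mem_piFinset.2 fun k => Finset.mem_image_of_mem _ hj
    _ = ∏ k, ∑ v ∈ s.image (· k), F k v := (Finset.prod_univ_sum _ _).symm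
    _ ≤ ∏ k, ∑' v, F k v := Finset.prod_le_prod' fun k _ => ENNReal.sum_le_tsum _

theorem tsum_prod_le_of_exists_notMem {ι κ : Type*} [Fintype ι] (F : ι → κ → ℝ≥0∞) (I : Set κ)
    {A B : ℝ≥0∞} (hA : ∀ k, ∑' v, F k v ≤ A) (hB : ∀ k, ∑' v : ↥Iᶜ, F k v ≤ B) :
    ∑' j : {j : ι → κ // ¬ ∀ k, j k ∈ I}, ∏ k, F k (j.1 k)
      ≤ Fintype.card ι * (B * A ^ (Fintype.card ι - 1)) := by
  classical
  set G : ι → ι → κ → ℝ≥0∞ := fun k => Function.update F k (Iᶜ.indicator (F k))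
  have hcover (j : {j : ι → κ // ¬ ∀ k, j k ∈ I}) :
      ∏ m, F m (j.1 m) ≤ ∑ k, ∏ m, G k m (j.1 m) := by
    obtain ⟨j, hj⟩ := j
    simp only [not_forall] at hj
    obtain ⟨k, hk⟩ := hj
    refine le_of_eq_of_le (Finset.prod_congr rfl fun m _ => ?_)
      (Finset.single_le_sum (f := fun k => ∏ m, G k m (j m)) (fun _ _ => zero_le)
        (Finset.mem_univ k))
    rcases eq_or_ne m k with rfl | hm
    · simp [G, hk]
    · simp [G, hm]
  have hslice (k : ι) : ∑' j : ι → κ, ∏ m, G k m (j m) ≤ B * A ^ (Fintype.card ι - 1) := by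
    have hG (m : ι) : ∑' v, G k m v
        = Function.update (fun m => ∑' v, F m v) k (∑' v, Iᶜ.indicator (F k) v) m := by
      rcases eq_or_ne m k with rfl | hm <;> simp [G, *]
    calc ∑' j : ι → κ, ∏ m, G k m (j m)
        ≤ ∏ m, ∑' v, G k m v := tsum_prod_le_prod_tsum _
      _ = (∑' v, Iᶜ.indicator (F k) v) * ∏ m ∈ Finset.univ \ {k}, ∑' v, F m v := by
        rw [Finset.prod_congr rfl fun m _ => hG m, Finset.prod_update_of_mem (Finset.mem_univ k)]
      _ ≤ B * A ^ (Fintype.card ι - 1) := by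
        rw [← tsum_subtype]
        gcongr
        · exact hB k
        · convert Finset.prod_le_pow_card _ _ A fun m _ => hA m
          rw [Finset.card_univ_sdiff, Finset.card_singleton]
  calc ∑' j : {j : ι → κ // ¬ ∀ k, j k ∈ I}, ∏ k, F k (j.1 k)
      ≤ ∑' j : {j : ι → κ // ¬ ∀ k, j k ∈ I}, ∑ k, ∏ m, G k m (j.1 m) :=
        ENNReal.tsum_le_tsum hcover
    _ ≤ ∑' j : ι → κ, ∑ k, ∏ m, G k m (j m) :=
        ENNReal.tsum_comp_le_tsum_of_injective (f := Subtype.val) Subtype.val_injective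
          (fun j : ι → κ => ∑ k, ∏ m, G k m (j m))
    _ = ∑ k, ∑' j : ι → κ, ∏ m, G k m (j m) :=
        Summable.tsum_finsetSum fun _ _ => ENNReal.summable
    _ ≤ ∑ _k : ι, B * A ^ (Fintype.card ι - 1) := Finset.sum_le_sum fun k _ => hslice k
    _ = Fintype.card ι * (B * A ^ (Fintype.card ι - 1)) := by simp

lemma tsum_le_of_tsum_ofReal_le {ι : Type*} {f : ι → ℝ} (hf : 0 ≤ f) {c : ℝ} (hc : 0 ≤ c)
    (h : ∑' i, ENNReal.ofReal (f i) ≤ ENNReal.ofReal c) : ∑' i, f i ≤ c := by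
  refine Real.tsum_le_of_sum_le hf fun u => (ENNReal.ofReal_le_ofReal_iff hc).1 ?_
  rw [ENNReal.ofReal_sum_of_nonneg fun i _ => hf i]
  exact (ENNReal.sum_le_tsum u).trans h

lemma sincd_sq_mul_exp_eq_prod {d : ℕ} (x : Fin d → ℝ) (r : ℝ) :
    sincd x ^ 2 * exp (-(∑ k, x k ^ 2) / r ^ 2)
      = ∏ k, _root_.sinc (x k) ^ 2 * exp (-x k ^ 2 / r ^ 2) := by
  rw [Finset.prod_mul_distrib, sincd, Finset.prod_pow, ← exp_sum, ← Finset.sum_div,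
    Finset.sum_neg_distrib]

theorem multivariate_tail_bound_general (d : ℕ) (r : ℝ) (hr : 0 < r)
    (n : ℤ) (hn : 2 ≤ n) (t : Fin d → ℝ) (ht : ∀ k, t k ∈ Set.Ioo (0 : ℝ) 1) :
    ∑' j : {j : Fin d → ℤ // ¬ ∀ k, j k ∈ Set.Ioc (-n) n},
        (sincd (fun k => t k - ((j : Fin d → ℤ) k : ℝ))) ^ 2 *
          Real.exp (-(∑ k, (t k - ((j : Fin d → ℤ) k : ℝ)) ^ 2) / r ^ 2)
      ≤ (d : ℝ) / π ^ 2 * (r ^ 2 * Real.exp (-((n : ℝ) - 1) ^ 2 / r ^ 2) /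
          ((n : ℝ) ^ 2 * ((n : ℝ) - 1))) := by
  have hn' : (1 : ℝ) < n := by exact_mod_cast hn
  have hn1 : (0 : ℝ) < n - 1 := by linarith
  set f : Fin d → ℤ → ℝ := fun k v => _root_.sinc (t k - v) ^ 2 * exp (-(t k - v) ^ 2 / r ^ 2)
  have hf (k : Fin d) (v : ℤ) : 0 ≤ f k v := by positivity
  simp_rw [sincd_sq_mul_exp_eq_prod]
  refine tsum_le_of_tsum_ofReal_le (fun j => Finset.prod_nonneg fun k _ => hf k _)
    (by positivity) ?_
  simp_rw [ENNReal.ofReal_prod_of_nonneg fun k _ => hf k _]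
  calc _ ≤ d * ENNReal.ofReal (r ^ 2 * exp (-(n - 1) ^ 2 / r ^ 2) / (π ^ 2 * n ^ 2 * (n - 1))) := by
        simpa using tsum_prod_le_of_exists_notMem (fun k v => ENNReal.ofReal (f k v)) _
          (fun k => tsum_sinc_sub_int_sq_mul_exp_le_one (t k) r)
          (fun k => tsum_sinc_sub_int_sq_mul_exp_compl_Ioc_le (ht k) hr hn')
    _ = _ := by
        rw [← ENNReal.ofReal_natCast, ← ENNReal.ofReal_mul (by positivity)]
        congr 1
        field_simp

theorem multivariate_tail_bound (d : ℕ) (hd : 1 ≤ d) (r : ℝ) (hr : 0 < r)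
    (n : ℤ) (hn : 2 ≤ n) (t : Fin d → ℝ) (ht : ∀ k, t k ∈ Set.Ioo (0 : ℝ) 1) :
    ∑' j : {j : Fin d → ℤ // ¬ ∀ k, j k ∈ Set.Ioc (-n) n},
        (sincd (fun k => t k - ((j : Fin d → ℤ) k : ℝ))) ^ 2 *
          Real.exp (-(∑ k, (t k - ((j : Fin d → ℤ) k : ℝ)) ^ 2) / r ^ 2)
      ≤ (d : ℝ) / π ^ 2 * (r ^ 2 * Real.exp (-((n : ℝ) - 1) ^ 2 / r ^ 2) /
          ((n : ℝ) ^ 2 * ((n : ℝ) - 1))) :=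
  multivariate_tail_bound_general d r hr n hn t ht
end

section
/- Let d ≥ 1, δ = (δ_1,…,δ_d) ∈ (0,π)^d, Δ = max_k δ_k, r > 0, and ξ ∈ ∏_{k=1}^d [-δ_k, δ_k]. Then 1 - ∏_{k=1}^d (1/√π) ∫_{(ξ_k-π)r/√2}^{(ξ_k+π)r/√2} e^{-τ²} dτ ≤ √(2/π) · d e^{-(π-Δ)² r²/2} / ((π-Δ) r). -/
/-!
Each factor is the mass that the Gaussian weight `π^{-1/2} e^{-τ²}` gives to a window containing
`[-c, c]` with `c = (π - Δ) r / √2`, so it misses at most the two tails beyond `±c`, each bounded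
by the Mills ratio `∫_c^∞ e^{-t²} dt ≤ e^{-c²} / (2c)`. Since all factors lie in `[0, 1]`,
`1 - ∏ p_k ≤ ∑ (1 - p_k)`, which sums `d` copies of `e^{-c²} / (√π c)`.
-/

open Real MeasureTheory intervalIntegral

theorem Finset.one_sub_prod_le_sum_one_sub {ι R : Type*} [CommRing R] [LinearOrder R]
    [IsStrictOrderedRing R] (s : Finset ι) {f : ι → R} (hf : ∀ i, f i ∈ Set.Icc 0 1) :
    1 - ∏ i ∈ s, f i ≤ ∑ i ∈ s, (1 - f i) := by
  -- `x ↦ 1 - x` is subadditive on the multiplicative monoid `[0, 1]`.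
  have key := apply_prod_le_sum_apply s (f := fun i ↦ (⟨f i, hf i⟩ : Set.Icc (0 : R) 1))
    (fun x ↦ 1 - (x : R)) (by simp) fun a b ↦ by
      have := mul_nonneg (sub_nonneg.2 a.2.2) (sub_nonneg.2 b.2.2)
      simp only [Set.Icc.coe_mul]
      linarith
  have hcoe : ((∏ i ∈ s, ⟨f i, hf i⟩ : Set.Icc (0 : R) 1) : R) = ∏ i ∈ s, f i :=
    map_prod Set.Icc.coeMonoidWithZeroHom _ _
  dsimp only at key
  rwa [hcoe] at key

lemma integral_Ioi_mul_exp_neg_sq (x : ℝ) :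
    ∫ t in Set.Ioi x, t * exp (-t ^ 2) = exp (-x ^ 2) / 2 := by
  have hderiv : ∀ t ∈ Set.Ici x, HasDerivAt (fun t ↦ -exp (-t ^ 2) / 2) (t * exp (-t ^ 2)) t :=
    fun t _ ↦ by
      have h : HasDerivAt (fun t : ℝ ↦ -t ^ 2) (-(2 * t)) t := by
        simpa using (hasDerivAt_pow 2 t).fun_neg
      rw [show t * exp (-t ^ 2) = -(exp (-t ^ 2) * -(2 * t)) / 2 by ring]
      exact h.exp.fun_neg.div_const 2
  have hint : IntegrableOn (fun t ↦ t * exp (-t ^ 2)) (Set.Ioi x) := by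
    simpa using (integrable_mul_exp_neg_mul_sq one_pos).integrableOn
  have hlim : Filter.Tendsto (fun t : ℝ ↦ -exp (-t ^ 2) / 2) Filter.atTop (nhds 0) := by
    simpa using ((tendsto_exp_atBot.comp
      (Filter.tendsto_neg_atTop_atBot.comp (Filter.tendsto_pow_atTop two_ne_zero))).neg.div_const 2)
  rw [integral_Ioi_of_hasDerivAt_of_tendsto' hderiv hint hlim]
  ring

lemma integral_Ioi_exp_neg_sq_le {x : ℝ} (hx : 0 < x) :
    ∫ t in Set.Ioi x, exp (-t ^ 2) ≤ exp (-x ^ 2) / (2 * x) := by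
  have hmono : ∫ t in Set.Ioi x, exp (-t ^ 2) ≤ ∫ t in Set.Ioi x, x⁻¹ * (t * exp (-t ^ 2)) := by
    refine setIntegral_mono_on (by simpa using (integrable_exp_neg_mul_sq one_pos).integrableOn)
      (by simpa using ((integrable_mul_exp_neg_mul_sq one_pos).const_mul x⁻¹).integrableOn)
      measurableSet_Ioi fun t ht ↦ ?_
    rw [← mul_assoc]
    exact le_mul_of_one_le_left (exp_pos _).le ((one_le_inv_mul₀ hx).2 (le_of_lt ht))
  rw [MeasureTheory.integral_const_mul, integral_Ioi_mul_exp_neg_sq] at hmono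
  calc _ ≤ x⁻¹ * (exp (-x ^ 2) / 2) := hmono
    _ = exp (-x ^ 2) / (2 * x) := by field_simp

lemma antitoneOn_exp_neg_sq_div : AntitoneOn (fun x : ℝ ↦ exp (-x ^ 2) / (2 * x)) (Set.Ioi 0) :=
  fun c hc x _ hcx ↦ div_le_div₀ (exp_pos _).le (exp_le_exp.2 (by nlinarith [hc.out]))
    (by linarith [hc.out]) (by linarith)

lemma integral_Ioi_exp_neg_sq_le_of_le {c x : ℝ} (hc : 0 < c) (hcx : c ≤ x) :
    ∫ t in Set.Ioi x, exp (-t ^ 2) ≤ exp (-c ^ 2) / (2 * c) :=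
  (integral_Ioi_exp_neg_sq_le (hc.trans_le hcx)).trans
    (antitoneOn_exp_neg_sq_div hc (hc.trans_le hcx) hcx)

lemma integral_exp_neg_sq_eq_sqrt_pi_sub_tails (a b : ℝ) :
    ∫ τ in a..b, exp (-τ ^ 2) =
      √π - (∫ t in Set.Ioi b, exp (-t ^ 2)) - ∫ t in Set.Ioi (-a), exp (-t ^ 2) := by
  have hint : Integrable fun t : ℝ ↦ exp (-t ^ 2) := by
    simpa using integrable_exp_neg_mul_sq one_pos
  have htotal : (∫ t in Set.Iic b, exp (-t ^ 2)) + ∫ t in Set.Ioi b, exp (-t ^ 2) = √π := by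
    rw [integral_Iic_add_Ioi hint.integrableOn hint.integrableOn]
    simpa using integral_gaussian 1
  have hleft : ∫ t in Set.Iic a, exp (-t ^ 2) = ∫ t in Set.Ioi (-a), exp (-t ^ 2) := by
    have h := integral_comp_neg_Iic a fun t ↦ exp (-t ^ 2)
    simpa using h
  have hdiff : (∫ t in Set.Iic b, exp (-t ^ 2)) - ∫ t in Set.Iic a, exp (-t ^ 2) =
      ∫ τ in a..b, exp (-τ ^ 2) :=
    integral_Iic_sub_Iic hint.integrableOn hint.integrableOn
  linarith

noncomputable def gaussianWindow (a b : ℝ) : ℝ :=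
  1 / √π * ∫ τ in a..b, exp (-τ ^ 2)

lemma one_sub_gaussianWindow (a b : ℝ) :
    1 - gaussianWindow a b =
      ((∫ t in Set.Ioi b, exp (-t ^ 2)) + ∫ t in Set.Ioi (-a), exp (-t ^ 2)) / √π := by
  have : 0 < √π := sqrt_pos.2 pi_pos
  rw [gaussianWindow, integral_exp_neg_sq_eq_sqrt_pi_sub_tails, one_div, mul_sub, mul_sub,
    inv_mul_cancel₀ this.ne']
  ring

lemma gaussianWindow_le_one (a b : ℝ) : gaussianWindow a b ≤ 1 := by
  have htail : ∀ s, 0 ≤ ∫ t in Set.Ioi s, exp (-t ^ 2) := fun s ↦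
    setIntegral_nonneg measurableSet_Ioi fun t _ ↦ (exp_pos _).le
  rw [← sub_nonneg, one_sub_gaussianWindow]
  exact div_nonneg (add_nonneg (htail _) (htail _)) (sqrt_nonneg _)

lemma gaussianWindow_nonneg {a b : ℝ} (hab : a ≤ b) : 0 ≤ gaussianWindow a b :=
  mul_nonneg (by positivity) (integral_nonneg hab fun t _ ↦ (exp_pos _).le)

lemma one_sub_gaussianWindow_le {a b c : ℝ} (hc : 0 < c) (ha : a ≤ -c) (hb : c ≤ b) :
    1 - gaussianWindow a b ≤ exp (-c ^ 2) / (√π * c) := by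
  rw [one_sub_gaussianWindow, mul_comm, ← div_div]
  gcongr
  have hb' := integral_Ioi_exp_neg_sq_le_of_le hc hb
  have ha' := integral_Ioi_exp_neg_sq_le_of_le hc (le_neg.1 ha)
  calc _ ≤ exp (-c ^ 2) / (2 * c) + exp (-c ^ 2) / (2 * c) := add_le_add hb' ha'
    _ = exp (-c ^ 2) / c := by field_simp; ring

theorem multivariate_gaussian_window_bound_general (d : ℕ) (δ : Fin d → ℝ)
    (hδ : ∀ k, δ k ∈ Set.Ioo (0 : ℝ) π) (Δ : ℝ) (hΔ : IsGreatest (Set.range δ) Δ)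
    (r : ℝ) (hr : 0 < r) (ξ : Fin d → ℝ) (hξ : ∀ k, ξ k ∈ Set.Icc (-(δ k)) (δ k)) :
    1 - ∏ k, (1 / Real.sqrt π) *
        ∫ τ in ((ξ k - π) * r / Real.sqrt 2)..((ξ k + π) * r / Real.sqrt 2), Real.exp (-τ ^ 2)
      ≤ Real.sqrt (2 / π) * ((d : ℝ) * Real.exp (-(π - Δ) ^ 2 * r ^ 2 / 2) / ((π - Δ) * r)) := by
  obtain ⟨⟨k₀, rfl⟩, hδ_le⟩ := hΔ
  set c := (π - δ k₀) * r / √2 with hc_def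
  have hc : 0 < c := div_pos (mul_pos (sub_pos.2 (hδ k₀).2) hr) (by positivity)
  have hξ_le : ∀ k, |ξ k| ≤ δ k₀ := fun k ↦ (abs_le.2 (hξ k)).trans (hδ_le ⟨k, rfl⟩)
  have hlower : ∀ k, (ξ k - π) * r / √2 ≤ -c := fun k ↦ by
    rw [show -c = (δ k₀ - π) * r / √2 by ring]
    gcongr
    linarith [le_abs_self (ξ k), hξ_le k]
  have hupper : ∀ k, c ≤ (ξ k + π) * r / √2 := fun k ↦ by
    rw [hc_def]
    gcongr
    linarith [neg_abs_le (ξ k), hξ_le k]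
  have hwindow : ∀ k, gaussianWindow ((ξ k - π) * r / √2) ((ξ k + π) * r / √2) ∈ Set.Icc 0 1 :=
    fun k ↦ ⟨gaussianWindow_nonneg (by linarith [hlower k, hupper k]), gaussianWindow_le_one _ _⟩
  calc 1 - ∏ k, gaussianWindow ((ξ k - π) * r / √2) ((ξ k + π) * r / √2)
      ≤ ∑ k, (1 - gaussianWindow ((ξ k - π) * r / √2) ((ξ k + π) * r / √2)) :=
        Finset.one_sub_prod_le_sum_one_sub _ hwindow
    _ ≤ ∑ _k : Fin d, exp (-c ^ 2) / (√π * c) :=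
        Finset.sum_le_sum fun k _ ↦ one_sub_gaussianWindow_le hc (hlower k) (hupper k)
    _ = √(2 / π) * (d * exp (-(π - δ k₀) ^ 2 * r ^ 2 / 2) / ((π - δ k₀) * r)) := by
        rw [Finset.sum_const, Finset.card_univ, Fintype.card_fin, nsmul_eq_mul, hc_def, div_pow,
          sq_sqrt zero_le_two, sqrt_div zero_le_two]
        field_simp

theorem multivariate_gaussian_window_bound (d : ℕ) (hd : 1 ≤ d) (δ : Fin d → ℝ)
    (hδ : ∀ k, δ k ∈ Set.Ioo (0 : ℝ) π) (Δ : ℝ) (hΔ : IsGreatest (Set.range δ) Δ)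
    (r : ℝ) (hr : 0 < r) (ξ : Fin d → ℝ) (hξ : ∀ k, ξ k ∈ Set.Icc (-(δ k)) (δ k)) :
    1 - ∏ k, (1 / Real.sqrt π) *
        ∫ τ in ((ξ k - π) * r / Real.sqrt 2)..((ξ k + π) * r / Real.sqrt 2), Real.exp (-τ ^ 2)
      ≤ Real.sqrt (2 / π) * ((d : ℝ) * Real.exp (-(π - Δ) ^ 2 * r ^ 2 / 2) / ((π - Δ) * r)) :=
  multivariate_gaussian_window_bound_general d δ hδ Δ hΔ r hr ξ hξ
end
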